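/- arXiv:2504.16282 — 3 statements merged into one kernel-verified Lean document; each statement's English description precedes it below -/
import Mathlib

section
/- Let A be a Noetherian p-adically complete commutative ring and Q a finitely generated p-torsion-free A-module such that Q/pQ is a projective A/pA-module. Then Q is a projective A-module. -/
/-!
Choose a surjection `π : A^m → Q`. Projectivity of `Q/pQ` gives a section of `π` modulo `p`,
hence an idempotent endomorphism of `(A/p)^m` with the same kernel as `π` modulo `p`. Lift it
to an endomorphism of `A^m`, then to a genuine idempotent `e` by the iteration `x ↦ 3x² - 2x³`,
which converges because `End(A^m)` is `p`-adically complete. The restriction of `π` to the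
direct summand `range e` is surjective by Nakayama, and injective because its kernel is
`p`-divisible (as `Q` has no `p`-torsion) inside the `p`-adically separated module `range e`.
-/

open Submodule

universe u

theorem IsAdicComplete.of_finite {A M : Type u} [CommRing A] [IsNoetherianRing A] (I : Ideal A)
    [IsAdicComplete I A] [AddCommGroup M] [Module A M] [Module.Finite A M] :
    IsAdicComplete I M := by
  rw [← AdicCompletion.of_bijective_iff]
  have hA : Function.Bijective (AdicCompletion.of I A) :=
    AdicCompletion.of_bijective_iff.2 inferInstance
  have hof : ⇑(AdicCompletion.of I M) = AdicCompletion.ofTensorProduct I M ∘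
      LinearMap.rTensor M (AdicCompletion.of I A) ∘ (TensorProduct.lid A M).symm := by
    ext x
    simp only [Function.comp_apply, TensorProduct.lid_symm_apply, LinearMap.rTensor_tmul,
      AdicCompletion.ofTensorProduct_tmul]
    rw [show AdicCompletion.of I A 1 = 1 from rfl, one_smul]
  rw [hof]
  exact (AdicCompletion.ofTensorProduct_bijective_of_finite_of_isNoetherian I M).comp
    ((LinearEquiv.rTensor M (LinearEquiv.ofBijective _ hA)).bijective.comp
      (TensorProduct.lid A M).symm.bijective)

section IdempotentLifting

variable {A R : Type*} [CommRing A] [Ring R] [Algebra A R] {I : Ideal A}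

theorem mul_mem_smul_top_of_right_mem {n : ℕ} (x : R) {y : R}
    (hy : y ∈ I ^ n • (⊤ : Submodule A R)) : x * y ∈ I ^ n • (⊤ : Submodule A R) :=
  smul_top_le_comap_smul_top _ (LinearMap.mulLeft A x) hy

theorem mul_mem_smul_top_of_left_mem {n : ℕ} {x : R} (hx : x ∈ I ^ n • (⊤ : Submodule A R))
    (y : R) : x * y ∈ I ^ n • (⊤ : Submodule A R) :=
  smul_top_le_comap_smul_top _ (LinearMap.mulRight A y) hx

theorem mul_mem_pow_add_smul_top {m n : ℕ} {x y : R} (hx : x ∈ I ^ m • (⊤ : Submodule A R))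
    (hy : y ∈ I ^ n • (⊤ : Submodule A R)) : x * y ∈ I ^ (m + n) • (⊤ : Submodule A R) := by
  rw [pow_add, ← smul_smul]
  refine smul_induction_on hx (fun a ha z _ => ?_) (fun x x' hx hx' => ?_)
  · rw [smul_mul_assoc]
    exact smul_mem_smul ha (mul_mem_smul_top_of_right_mem z hy)
  · rw [add_mul]
    exact add_mem hx hx'

def newtonIdempotentStep (a : R) : R := 3 * a ^ 2 - 2 * a ^ 3

theorem newtonIdempotentStep_sub (a : R) :
    newtonIdempotentStep a - a = -((2 * a - 1) * (a ^ 2 - a)) := by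
  unfold newtonIdempotentStep
  noncomm_ring

theorem newtonIdempotentStep_sq_sub (a : R) :
    newtonIdempotentStep a ^ 2 - newtonIdempotentStep a =
      (4 * (a ^ 2 - a) - 3) * ((a ^ 2 - a) * (a ^ 2 - a)) := by
  unfold newtonIdempotentStep
  noncomm_ring

theorem exists_isIdempotentElem_sub_mem_smul_top [IsAdicComplete I R] {u : R}
    (hu : u ^ 2 - u ∈ I • (⊤ : Submodule A R)) :
    ∃ e : R, IsIdempotentElem e ∧ e - u ∈ I • (⊤ : Submodule A R) := by
  set s : ℕ → R := fun n => newtonIdempotentStep^[n] u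
  have hs : ∀ n, s (n + 1) = newtonIdempotentStep (s n) := fun n =>
    Function.iterate_succ_apply' _ n u
  have hsq : ∀ n, s n ^ 2 - s n ∈ I ^ (n + 1) • (⊤ : Submodule A R) := by
    intro n
    induction n with
    | zero => simpa [s] using hu
    | succ n ih =>
      rw [hs, newtonIdempotentStep_sq_sub]
      refine mul_mem_smul_top_of_right_mem _ (smul_mono_left (Ideal.pow_le_pow_right ?_)
        (mul_mem_pow_add_smul_top ih ih))
      omega
  have hstep : ∀ n, s (n + 1) - s n ∈ I ^ (n + 1) • (⊤ : Submodule A R) := fun n => by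
    rw [hs, newtonIdempotentStep_sub]
    exact neg_mem (mul_mem_smul_top_of_right_mem _ (hsq n))
  obtain ⟨e, he⟩ := IsPrecomplete.prec inferInstance
    ((AdicCompletion.isAdicCauchy_iff I R s).2 fun n => by
      rw [SModEq.comm, SModEq.sub_mem]
      exact smul_mono_left (Ideal.pow_le_pow_right n.le_succ) (hstep n))
  have hes : ∀ n, e - s n ∈ I ^ n • (⊤ : Submodule A R) := fun n =>
    SModEq.sub_mem.1 (he n).symm
  refine ⟨e, ?_, ?_⟩
  · refine sub_eq_zero.1 (IsHausdorff.haus (I := I) inferInstance _ fun n => ?_)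
    rw [SModEq.sub_mem, sub_zero,
      show e * e - e = e * (e - s n) + (e - s n) * s n + (s n ^ 2 - s n) - (e - s n) by
        noncomm_ring]
    exact sub_mem (add_mem (add_mem (mul_mem_smul_top_of_right_mem e (hes n))
      (mul_mem_smul_top_of_left_mem (hes n) _))
      (smul_mono_left (Ideal.pow_le_pow_right n.le_succ) (hsq n))) (hes n)
  · rw [show e - u = (e - s 1) + (s 1 - s 0) by simp [s]]
    simpa using add_mem (hes 1) (hstep 0)

end IdempotentLifting

theorem Module.End.mem_smul_top_of_forall_apply_mem {A F : Type*} [CommRing A] [AddCommGroup F]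
    [Module A F] [Module.Free A F] [Module.Finite A F] {I : Ideal A} {f : Module.End A F}
    (h : ∀ x, f x ∈ I • (⊤ : Submodule A F)) :
    f ∈ I • (⊤ : Submodule A (Module.End A F)) := by
  let b := Module.Free.chooseBasis A F
  have hf : f = ∑ i, LinearMap.smulRightₗ (b.coord i) (f (b i)) :=
    b.ext fun j => by simp [Basis.coord_apply, Finsupp.single_apply]
  rw [hf]
  exact sum_mem fun i _ => smul_top_le_comap_smul_top I _ (h (b i))

open Pointwise in
theorem LinearMap.injective_of_ker_le_smul_top {A M N : Type*} [CommRing A] [AddCommGroup M]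
    [Module A M] [AddCommGroup N] [Module A N] {a : A} [IsHausdorff (Ideal.span {a}) M]
    (ha : IsSMulRegular N a) (f : M →ₗ[A] N)
    (hf : LinearMap.ker f ≤ Ideal.span {a} • ⊤) : Function.Injective f := by
  have hpow : ∀ n, LinearMap.ker f ≤ Ideal.span {a} ^ n • ⊤ := by
    intro n
    induction n with
    | zero => simp
    | succ n ih =>
      intro x hx
      have hx' := hf hx
      rw [ideal_span_singleton_smul] at hx'
      obtain ⟨y, -, rfl⟩ := (mem_smul_pointwise_iff_exists _ _ _).1 hx'
      have hy : y ∈ LinearMap.ker f := ha (by simpa using hx)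
      rw [pow_succ', ← smul_smul]
      exact smul_mem_smul (Ideal.mem_span_singleton_self a) (ih hy)
  rw [← LinearMap.ker_eq_bot, eq_bot_iff,
    ← IsHausdorff.iInf_pow_smul (I := Ideal.span {a}) inferInstance]
  exact le_iInf hpow

section Splitting

variable {A F Q : Type*} [CommRing A] [AddCommGroup F] [Module A F] [AddCommGroup Q] [Module A Q]

/-- For surjective `π`: `u` reduces modulo `I` to `σ ∘ π` for a section `σ` of `π` modulo `I`. -/
def IsSplittingModIdeal (I : Ideal A) (π : F →ₗ[A] Q) (u : Module.End A F) : Prop :=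
  (∀ x, π (u x) - π x ∈ I • (⊤ : Submodule A Q)) ∧
    ∀ x, π x ∈ I • (⊤ : Submodule A Q) → u x ∈ I • (⊤ : Submodule A F)

variable {I : Ideal A} {π : F →ₗ[A] Q} {u : Module.End A F}

theorem IsSplittingModIdeal.sq_sub_mem [Module.Free A F] [Module.Finite A F]
    (hu : IsSplittingModIdeal I π u) : u ^ 2 - u ∈ I • (⊤ : Submodule A (Module.End A F)) := by
  refine Module.End.mem_smul_top_of_forall_apply_mem fun x => ?_
  have := hu.2 (u x - x) (by rw [map_sub]; exact hu.1 x)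
  simpa [pow_two] using this

theorem IsSplittingModIdeal.of_sub_mem (hu : IsSplittingModIdeal I π u) {e : Module.End A F}
    (he : e - u ∈ I • (⊤ : Submodule A (Module.End A F))) : IsSplittingModIdeal I π e := by
  have hex : ∀ x, e x - u x ∈ I • (⊤ : Submodule A F) := fun x =>
    smul_top_le_comap_smul_top I (LinearMap.applyₗ x) he
  refine ⟨fun x => ?_, fun x hx => ?_⟩
  · rw [show π (e x) - π x = π (e x - u x) + (π (u x) - π x) by simp]
    exact add_mem (smul_top_le_comap_smul_top I π (hex x)) (hu.1 x)
  · rw [← sub_add_cancel (e x) (u x)]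
    exact add_mem (hex x) (hu.2 x hx)

theorem exists_isSplittingModIdeal [Module.Projective A F]
    [Module.Projective (A ⧸ I) (Q ⧸ I • (⊤ : Submodule A Q))] (hπ : Function.Surjective π) :
    ∃ u, IsSplittingModIdeal I π u := by
  have hπ' : Function.Surjective (π.reduceModIdeal I) := by
    intro y
    obtain ⟨q, rfl⟩ := mkQ_surjective _ y
    obtain ⟨x, rfl⟩ := hπ q
    exact ⟨Submodule.Quotient.mk x, rfl⟩
  obtain ⟨σ, hσ⟩ := Module.projective_lifting_property _ LinearMap.id hπ'
  obtain ⟨u, hu⟩ := Module.projective_lifting_property (I • ⊤ : Submodule A F).mkQ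
    ((σ ∘ₗ π.reduceModIdeal I).restrictScalars A ∘ₗ (I • ⊤ : Submodule A F).mkQ)
    (mkQ_surjective _)
  have hux : ∀ x, (Submodule.Quotient.mk (u x) : F ⧸ (I • ⊤ : Submodule A F)) =
      σ (Submodule.Quotient.mk (π x)) := fun x => LinearMap.congr_fun hu x
  refine ⟨u, fun x => ?_, fun x hx => ?_⟩
  · rw [← Submodule.Quotient.eq]
    change π.reduceModIdeal I (Submodule.Quotient.mk (u x)) = _
    rw [hux]
    exact LinearMap.congr_fun hσ _
  · rw [← Submodule.Quotient.mk_eq_zero] at hx ⊢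
    rw [hux, hx, map_zero]

end Splitting

theorem Module.Projective.of_isSplittingModIdeal {A F : Type u} {Q : Type*} [CommRing A]
    [IsNoetherianRing A] {a : A} [IsAdicComplete (Ideal.span {a}) A] [AddCommGroup F]
    [Module A F] [Module.Projective A F] [Module.Finite A F] [AddCommGroup Q] [Module A Q]
    [Module.Finite A Q] (ha : IsSMulRegular Q a) {π : F →ₗ[A] Q} (hπ : Function.Surjective π)
    {e : Module.End A F} (he : IsIdempotentElem e)
    (hsplit : IsSplittingModIdeal (Ideal.span {a}) π e) :
    Module.Projective A Q := by
  set I := Ideal.span {a}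
  have hfix : ∀ y : LinearMap.range e, e y = y := fun y =>
    (LinearMap.IsIdempotentElem.mem_range_iff he).1 y.2
  have : IsAdicComplete I (LinearMap.range e) := .of_finite I
  have : Module.Projective A (LinearMap.range e) :=
    .of_split (LinearMap.range e).subtype e.rangeRestrict
      (LinearMap.ext fun y => Subtype.ext (hfix y))
  let g := π ∘ₗ (LinearMap.range e).subtype
  have hsurj : Function.Surjective g := by
    refine LinearMap.surjective_of_surjective_comp_mkQ g I (IsAdicComplete.le_jacobson_bot I) ?_
    intro y
    obtain ⟨q, rfl⟩ := mkQ_surjective _ y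
    obtain ⟨x, rfl⟩ := hπ q
    exact ⟨⟨e x, x, rfl⟩, (Submodule.Quotient.eq _).2 (hsplit.1 x)⟩
  have hinj : Function.Injective g := by
    refine LinearMap.injective_of_ker_le_smul_top ha g fun y hy => ?_
    have hy' : (y : F) ∈ I • ⊤ :=
      hfix y ▸ hsplit.2 y (by rw [show π y = 0 from hy]; exact zero_mem _)
    have := smul_top_le_comap_smul_top I e.rangeRestrict hy'
    rwa [Submodule.mem_comap, show e.rangeRestrict y = y from Subtype.ext (hfix y)] at this
  exact .of_equiv (LinearEquiv.ofBijective g ⟨hinj, hsurj⟩)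

theorem stmt_0_general (p : ℕ) (A : Type*) [CommRing A] [IsNoetherianRing A]
    (hA : IsAdicComplete (Ideal.span {(p : A)}) A)
    (Q : Type*) [AddCommGroup Q] [Module A Q] [Module.Finite A Q]
    (hQ : Function.Injective fun q : Q => (p : A) • q)
    (hproj : Module.Projective (A ⧸ Ideal.span {(p : A)})
      (Q ⧸ (Ideal.span {(p : A)} • (⊤ : Submodule A Q)))) :
    Module.Projective A Q := by
  obtain ⟨m, π, hπ⟩ := Module.Finite.exists_fin' A Q
  obtain ⟨u, hu⟩ := exists_isSplittingModIdeal (I := Ideal.span {(p : A)}) hπ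
  have := hA
  have : IsAdicComplete (Ideal.span {(p : A)}) (Module.End A (Fin m → A)) := .of_finite _
  obtain ⟨e, he, heu⟩ := exists_isIdempotentElem_sub_mem_smul_top hu.sq_sub_mem
  exact .of_isSplittingModIdeal hQ hπ he (hu.of_sub_mem heu)

/-- If `A` is a Noetherian `p`-adically complete commutative ring and `Q` a finitely
generated `p`-torsion-free `A`-module such that `Q/pQ` is projective over `A/pA`,
then `Q` is a projective `A`-module. -/
theorem stmt_0 (p : ℕ) (hp : p.Prime) (A : Type*) [CommRing A] [IsNoetherianRing A]
    (hA : IsAdicComplete (Ideal.span {(p : A)}) A)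
    (Q : Type*) [AddCommGroup Q] [Module A Q] [Module.Finite A Q]
    (hQ : Function.Injective fun q : Q => (p : A) • q)
    (hproj : Module.Projective (A ⧸ Ideal.span {(p : A)})
      (Q ⧸ (Ideal.span {(p : A)} • (⊤ : Submodule A Q)))) :
    Module.Projective A Q :=
  stmt_0_general p A hA Q hQ hproj
end

section
/- Let A be a commutative ring, d ∈ A a nonzerodivisor, M a finite projective A-module, and φ : N → M an A-linear map from a finite projective A-module N such that φ becomes an isomorphism after inverting d. Define Fil^r = {x ∈ N : φ(x) ∈ d^r M} for r ≥ 0. Then for every r ≥ 1, Fil^r ∩ dN = d·Fil^{r-1}; equivalently, the natural map Fil^r/(d·Fil^{r-1}) → N/dN is injective. -/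
open Pointwise

theorem Submodule.comap_smul_inf_smul_top {R M N : Type*} [CommRing R]
    [AddCommGroup M] [Module R M] [AddCommGroup N] [Module R N]
    (φ : N →ₗ[R] M) {d : R} (hd : IsSMulRegular M d) (P : Submodule R M) :
    (d • P).comap φ ⊓ d • ⊤ = d • P.comap φ := by
  ext x
  simp only [mem_inf, mem_comap, mem_smul_pointwise_iff_exists, mem_top, true_and]
  constructor
  · rintro ⟨⟨p, hp, hφx⟩, y, rfl⟩
    rw [map_smul] at hφx
    exact ⟨y, hd hφx ▸ hp, rfl⟩
  · rintro ⟨y, hy, rfl⟩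
    exact ⟨⟨φ y, hy, (map_smul φ d y).symm⟩, y, rfl⟩

theorem stmt_2_general (A : Type*) [CommRing A] (d : A) (hd : d ∈ nonZeroDivisors A)
    (M N : Type*) [AddCommGroup M] [Module A M] [Module.Projective A M]
    [AddCommGroup N] [Module A N]
    (φ : N →ₗ[A] M)
    (Fil : ℕ → Submodule A N)
    (hFil : ∀ r : ℕ, Fil r = Submodule.comap φ (d ^ r • (⊤ : Submodule A M))) :
    ∀ r : ℕ, 1 ≤ r → Fil r ⊓ (d • (⊤ : Submodule A N)) = d • Fil (r - 1) := by
  intro r hr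
  obtain ⟨r, rfl⟩ := Nat.exists_eq_add_of_le' hr
  rw [hFil, hFil, Nat.add_sub_cancel, pow_succ', mul_smul]
  exact Submodule.comap_smul_inf_smul_top φ (Module.Flat.isSMulRegular_of_nonZeroDivisors hd) _

/-- For a nonzerodivisor `d`, finite projective modules `M`, `N` and `φ : N → M`
which becomes an isomorphism after inverting `d`, the Nygaard-type filtration
`Fil^r = φ⁻¹(d^r M)` satisfies `Fil^r ∩ dN = d·Fil^{r-1}` for all `r ≥ 1`. -/
theorem stmt_2 (A : Type*) [CommRing A] (d : A) (hd : d ∈ nonZeroDivisors A)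
    (M N : Type*) [AddCommGroup M] [Module A M] [Module.Finite A M] [Module.Projective A M]
    [AddCommGroup N] [Module A N] [Module.Finite A N] [Module.Projective A N]
    (φ : N →ₗ[A] M)
    (hφ : Function.Bijective (LocalizedModule.map (Submonoid.powers d) φ))
    (Fil : ℕ → Submodule A N)
    (hFil : ∀ r : ℕ, Fil r = Submodule.comap φ (d ^ r • (⊤ : Submodule A M))) :
    ∀ r : ℕ, 1 ≤ r → Fil r ⊓ (d • (⊤ : Submodule A N)) = d • Fil (r - 1) :=
  stmt_2_general A d hd M N φ Fil hFil
end

section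
/- With notation as before: if moreover each graded piece Gr^r(Fil^•) = Fil^r/Fil^{r+1} is p-torsion-free, then the natural map F̃ → M[1/p], induced on the copy of Fil^r in the colimit by x ↦ p^{-r}x, is injective, with image equal to ∑_{r∈ℤ} p^{-r} Fil^r ⊆ M[1/p]. -/
open Pointwise
open scoped DirectSum

/-- The relations submodule presenting the colimit
`⋯ → Fil^{r+1} ←(·p)− Fil^{r+1} → Fil^r ←(·p)− Fil^r → Fil^{r-1} → ⋯`. -/
def filtColimRel (R : Type*) [CommRing R] (M : Type*) [AddCommGroup M] [Module R M]
    (p : R) (Fil : ℤ → Submodule R M) :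
    Submodule R (⨁ r : ℤ, ↥(Fil r)) :=
  Submodule.span R
    {z | ∃ (r : ℤ) (x : M) (_ : x ∈ Fil r) (hx' : x ∈ Fil (r - 1)) (hpx : p • x ∈ Fil r),
      z = DirectSum.lof R ℤ (fun r => ↥(Fil r)) r ⟨p • x, hpx⟩ -
        DirectSum.lof R ℤ (fun r => ↥(Fil r)) (r - 1) ⟨x, hx'⟩}

/-- The map `Fil^r → M[1/p]`, `x ↦ p^{-r} x`. -/
noncomputable def filtToLoc (R : Type*) [CommRing R] (M : Type*) [AddCommGroup M]
    [Module R M] (p : R) (Fil : ℤ → Submodule R M) (r : ℤ) :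
    ↥(Fil r) →ₗ[R] LocalizedModule (Submonoid.powers p) M :=
  p ^ (-r).toNat •
    (LocalizedModule.divBy (⟨p ^ r.toNat, r.toNat, rfl⟩ : Submonoid.powers p) ∘ₗ
      LocalizedModule.mkLinearMap (Submonoid.powers p) M ∘ₗ (Fil r).subtype)

/-- The induced map `⊕_r Fil^r → M[1/p]`. -/
noncomputable def filtSumToLoc (R : Type*) [CommRing R] (M : Type*) [AddCommGroup M]
    [Module R M] (p : R) (Fil : ℤ → Submodule R M) :
    (⨁ r : ℤ, ↥(Fil r)) →ₗ[R] LocalizedModule (Submonoid.powers p) M :=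
  DirectSum.toModule R ℤ _ (filtToLoc R M p Fil)

/-!
Since the graded pieces are `p`-torsion-free and the filtration is finite, each `Fil^r` is
`p`-saturated in `M` (`p x ∈ Fil^r → x ∈ Fil^r`) and `M` is `p`-torsion-free, so `M → M[1/p]` is
injective. The relations map to zero because `p^{-r} (p x) = p^{-(r-1)} x`. Conversely, if
`z = ∑_{s-n ≤ r ≤ s} z_r` maps to zero, then `p^{-s} z_s ∈ p^{-(s-1)} M`, i.e. `z_s = p y`; by
saturation `y ∈ Fil^s`, and subtracting the relation attached to `y` moves `z_s` down to degree
`s - 1`. Induction on the width of the support shows that `z` is a combination of relations.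
The description of the image holds for any map out of a direct sum.
-/

theorem DirectSum.range_toModule {R ι N : Type*} [Semiring R] [DecidableEq ι]
    {A : ι → Type*} [∀ i, AddCommMonoid (A i)] [∀ i, Module R (A i)]
    [AddCommMonoid N] [Module R N] (φ : ∀ i, A i →ₗ[R] N) :
    LinearMap.range (DirectSum.toModule R ι N φ) = ⨆ i, LinearMap.range (φ i) := by
  refine le_antisymm ?_ (iSup_le fun i => ?_)
  · rintro _ ⟨z, rfl⟩
    exact Submodule.dfinsuppSumAddHom_mem _ z _ fun i _ =>
      Submodule.mem_iSup_of_mem i (LinearMap.mem_range_self _ _)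
  · rintro _ ⟨x, rfl⟩
    exact ⟨DirectSum.lof R ι A i x, DirectSum.toModule_lof R i x⟩

theorem DirectSum.eq_lof_of_apply_ne_eq_zero {R ι : Type*} [Semiring R] [DecidableEq ι]
    {A : ι → Type*} [∀ i, AddCommMonoid (A i)] [∀ i, Module R (A i)] {z : ⨁ i, A i} {s : ι}
    (hz : ∀ r, r ≠ s → z r = 0) : z = DirectSum.lof R ι A s (z s) := by
  ext r
  rcases eq_or_ne r s with rfl | hrs
  · rw [DirectSum.lof_apply]
  · rw [hz r hrs, DirectSum.lof_eq_of, DirectSum.of_eq_of_ne _ _ _ hrs]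

section DivPow

variable {R : Type*} [CommRing R] {M : Type*} [AddCommGroup M] [Module R M] (p : R)

/-- `x ↦ p⁻ᵗ x`; `filtToLoc R M p Fil r` is its restriction to `Fil r`. -/
noncomputable def divPow (t : ℤ) : M →ₗ[R] LocalizedModule (Submonoid.powers p) M :=
  p ^ (-t).toNat •
    (LocalizedModule.divBy (⟨p ^ t.toNat, t.toNat, rfl⟩ : Submonoid.powers p) ∘ₗ
      LocalizedModule.mkLinearMap (Submonoid.powers p) M)

theorem filtToLoc_eq_divPow_comp (Fil : ℤ → Submodule R M) (r : ℤ) :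
    filtToLoc R M p Fil r = divPow p r ∘ₗ (Fil r).subtype :=
  rfl

theorem divPow_apply (t : ℤ) (x : M) :
    divPow p t x = LocalizedModule.mk (p ^ (-t).toNat • x)
      (⟨p ^ t.toNat, t.toNat, rfl⟩ : Submonoid.powers p) := by
  simp [divPow, LocalizedModule.divBy_apply, LocalizedModule.liftOn_mk,
    LocalizedModule.smul'_mk]

theorem divPow_smul (t : ℤ) (x : M) : divPow p t (p • x) = divPow p (t - 1) x := by
  rw [divPow_apply, divPow_apply, LocalizedModule.mk_eq]
  refine ⟨1, ?_⟩
  simp only [one_smul, Submonoid.smul_def, smul_smul, ← pow_succ, ← pow_add]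
  congr 2
  omega

theorem divPow_pow_smul (t : ℤ) (n : ℕ) (x : M) :
    divPow p t (p ^ n • x) = divPow p (t - n) x := by
  induction n generalizing t with
  | zero => simp
  | succ n ih =>
    rw [pow_succ', mul_smul, divPow_smul, ih]
    congr 2
    omega

theorem divPow_injective (hp : IsSMulRegular M p) (t : ℤ) :
    Function.Injective (divPow p t : M → LocalizedModule (Submonoid.powers p) M) := by
  intro x y h
  rw [divPow_apply, divPow_apply, LocalizedModule.mk_eq] at h
  obtain ⟨⟨_, n, rfl⟩, h⟩ := h
  simp only [Submonoid.smul_def, smul_smul, ← pow_add] at h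
  exact hp.pow _ h

end DivPow

section Filtration

variable {R : Type*} [CommRing R] {M : Type*} [AddCommGroup M] [Module R M] (p : R)
  {Fil : ℤ → Submodule R M}

theorem mem_of_smul_mem_of_grTorsionFree (hanti : Antitone Fil)
    (htop : ∀ r : ℤ, r ≤ 0 → Fil r = ⊤)
    (htf : ∀ (r : ℤ) (x : M), x ∈ Fil r → p • x ∈ Fil (r + 1) → x ∈ Fil (r + 1))
    {r : ℤ} {x : M} (hx : p • x ∈ Fil r) : x ∈ Fil r := by
  induction r using Int.induction_on with
  | zero => simp [htop 0 le_rfl]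
  | succ r ih => exact htf r x (ih (hanti (by omega) hx)) hx
  | pred r => simp [htop (-(r : ℤ) - 1) (by omega)]

theorem isSMulRegular_of_mem_of_smul_mem (hsat : ∀ r (x : M), p • x ∈ Fil r → x ∈ Fil r)
    (hbot : ∃ b : ℤ, ∀ r ≥ b, Fil r = ⊥) : IsSMulRegular M p := by
  obtain ⟨b, hb⟩ := hbot
  refine fun x y hxy => sub_eq_zero.mp ?_
  have h : p • (x - y) ∈ Fil b := by simp [smul_sub, hxy]
  simpa [hb b le_rfl] using hsat b _ h

end Filtration

section Colimit

variable {R : Type*} [CommRing R] {M : Type*} [AddCommGroup M] [Module R M] (p : R)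
  (Fil : ℤ → Submodule R M)

theorem filtColimRel_le_ker_filtSumToLoc :
    filtColimRel R M p Fil ≤ LinearMap.ker (filtSumToLoc R M p Fil) := by
  rw [filtColimRel, Submodule.span_le]
  rintro _ ⟨r, x, -, hx', hpx, rfl⟩
  simp only [SetLike.mem_coe, LinearMap.mem_ker, map_sub, filtSumToLoc, DirectSum.toModule_lof,
    sub_eq_zero]
  exact divPow_smul p r x

theorem filtSumToLoc_mem_range_divPow {t : ℤ} {z : ⨁ r, Fil r} (hz : ∀ r, z r ≠ 0 → r ≤ t) :
    filtSumToLoc R M p Fil z ∈ LinearMap.range (divPow p t : M →ₗ[R] _) :=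
  Submodule.dfinsuppSumAddHom_mem _ z _ fun r hr =>
    ⟨p ^ (t - r).toNat • (z r : M), by
      rw [divPow_pow_smul, Int.toNat_of_nonneg (sub_nonneg.2 (hz r hr)), sub_sub_cancel]
      rfl⟩

theorem exists_smul_eq_of_mem_ker_filtSumToLoc (hreg : IsSMulRegular M p) {s : ℤ}
    {z : ⨁ r, Fil r} (hz : z ∈ LinearMap.ker (filtSumToLoc R M p Fil))
    (hsupp : ∀ r, z r ≠ 0 → r ≤ s) : ∃ y : M, p • y = z s := by
  set w := z - DirectSum.lof R ℤ (fun r => Fil r) s (z s) with hw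
  have hw_supp : ∀ r, w r ≠ 0 → r ≤ s - 1 := by
    intro r hr
    rcases eq_or_ne r s with rfl | hrs
    · simp [w, DirectSum.lof_apply] at hr
    · rw [hw, DirectSum.sub_apply, DirectSum.lof_eq_of, DirectSum.of_eq_of_ne _ _ _ hrs,
        sub_zero] at hr
      have := hsupp r hr
      omega
  obtain ⟨v, hv⟩ := filtSumToLoc_mem_range_divPow p Fil hw_supp
  have hsplit : filtSumToLoc R M p Fil z = filtSumToLoc R M p Fil w + divPow p s (z s : M) := by
    rw [hw, map_sub, filtSumToLoc, DirectSum.toModule_lof, filtToLoc_eq_divPow_comp]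
    exact (sub_add_cancel _ _).symm
  refine ⟨-v, divPow_injective p hreg s ?_⟩
  rw [LinearMap.mem_ker, hsplit, ← hv, ← divPow_smul] at hz
  rw [smul_neg, map_neg]
  exact (eq_neg_of_add_eq_zero_right hz).symm

theorem mem_filtColimRel_of_mem_ker_of_support_subset_Icc (hanti : Antitone Fil)
    (hsat : ∀ r (x : M), p • x ∈ Fil r → x ∈ Fil r) (hreg : IsSMulRegular M p) (n : ℕ) :
    ∀ (s : ℤ) (z : ⨁ r, Fil r), z ∈ LinearMap.ker (filtSumToLoc R M p Fil) →
      (∀ r, z r ≠ 0 → r ∈ Set.Icc (s - n) s) → z ∈ filtColimRel R M p Fil := by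
  induction n with
  | zero =>
    intro s z hz hsupp
    have hzs : z = DirectSum.lof R ℤ _ s (z s) :=
      DirectSum.eq_lof_of_apply_ne_eq_zero fun r hrs => by
        by_contra hr
        obtain ⟨h₁, h₂⟩ := hsupp r hr
        omega
    rw [LinearMap.mem_ker, hzs, filtSumToLoc, DirectSum.toModule_lof] at hz
    have : z s = 0 := Subtype.ext (divPow_injective p hreg s (hz.trans (map_zero _).symm))
    rw [hzs, this, map_zero]
    exact zero_mem _
  | succ n ih =>
    intro s z hz hsupp
    obtain ⟨y, hy⟩ := exists_smul_eq_of_mem_ker_filtSumToLoc p Fil hreg hz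
      fun r hr => (hsupp r hr).2
    have hpy : p • y ∈ Fil s := hy ▸ (z s).2
    have hys : y ∈ Fil s := hsat s y hpy
    have hys' : y ∈ Fil (s - 1) := hanti (by omega) hys
    set g := DirectSum.lof R ℤ (fun r => Fil r) s ⟨p • y, hpy⟩ -
      DirectSum.lof R ℤ (fun r => Fil r) (s - 1) ⟨y, hys'⟩ with hg
    have hg_mem : g ∈ filtColimRel R M p Fil := Submodule.subset_span ⟨s, y, hys, hys', hpy, rfl⟩
    suffices z - g ∈ filtColimRel R M p Fil by simpa using add_mem this hg_mem
    refine ih (s - 1) (z - g) (sub_mem hz (filtColimRel_le_ker_filtSumToLoc p Fil hg_mem)) ?_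
    intro r hr
    rcases eq_or_ne r (s - 1) with rfl | hr₁
    · constructor <;> omega
    rcases eq_or_ne r s with rfl | hr₀
    · refine absurd ?_ hr
      rw [hg, DirectSum.sub_apply, DirectSum.sub_apply, DirectSum.lof_apply, DirectSum.lof_eq_of,
        DirectSum.of_eq_of_ne _ _ _ hr₁, sub_zero, sub_eq_zero]
      exact Subtype.ext hy.symm
    rw [hg, DirectSum.sub_apply, DirectSum.sub_apply, DirectSum.lof_eq_of, DirectSum.lof_eq_of,
      DirectSum.of_eq_of_ne _ _ _ hr₀, DirectSum.of_eq_of_ne _ _ _ hr₁, sub_zero, sub_zero] at hr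
    obtain ⟨h₁, h₂⟩ := hsupp r hr
    constructor <;> omega

theorem ker_filtSumToLoc_le_filtColimRel (hanti : Antitone Fil)
    (hsat : ∀ r (x : M), p • x ∈ Fil r → x ∈ Fil r) (hreg : IsSMulRegular M p) :
    LinearMap.ker (filtSumToLoc R M p Fil) ≤ filtColimRel R M p Fil := by
  classical
  intro z hz
  obtain ⟨s, hs⟩ := (DFinsupp.support z).bddAbove
  obtain ⟨m, hm⟩ := (DFinsupp.support z).bddBelow
  refine mem_filtColimRel_of_mem_ker_of_support_subset_Icc p Fil hanti hsat hreg
    (s - m).toNat s z hz fun r hr => ?_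
  have hr' : r ∈ (DFinsupp.support z : Set ℤ) := DFinsupp.mem_support_iff.mpr hr
  have := hs hr'
  have := hm hr'
  constructor <;> omega

end Colimit

theorem stmt_6_general (R : Type*) [CommRing R] (p : R)
    (M : Type*) [AddCommGroup M] [Module R M]
    (Fil : ℤ → Submodule R M) (hanti : Antitone Fil)
    (htop : ∀ r : ℤ, r ≤ 0 → Fil r = ⊤) (hbot : ∃ b : ℤ, ∀ r ≥ b, Fil r = ⊥)
    (htf : ∀ (r : ℤ) (x : M), x ∈ Fil r → p • x ∈ Fil (r + 1) → x ∈ Fil (r + 1)) :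
    filtColimRel R M p Fil ≤ LinearMap.ker (filtSumToLoc R M p Fil) ∧
    ∀ h : filtColimRel R M p Fil ≤ LinearMap.ker (filtSumToLoc R M p Fil),
      Function.Injective ((filtColimRel R M p Fil).liftQ (filtSumToLoc R M p Fil) h) ∧
      LinearMap.range ((filtColimRel R M p Fil).liftQ (filtSumToLoc R M p Fil) h) =
        ⨆ r : ℤ, LinearMap.range (filtToLoc R M p Fil r) := by
  have hsat : ∀ r (x : M), p • x ∈ Fil r → x ∈ Fil r := fun _ _ =>
    mem_of_smul_mem_of_grTorsionFree p hanti htop htf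
  have hreg : IsSMulRegular M p := isSMulRegular_of_mem_of_smul_mem p hsat hbot
  refine ⟨filtColimRel_le_ker_filtSumToLoc p Fil, fun h => ⟨?_, ?_⟩⟩
  · exact LinearMap.ker_eq_bot.mp (Submodule.ker_liftQ_eq_bot _ _ h
      (ker_filtSumToLoc_le_filtColimRel p Fil hanti hsat hreg))
  · rw [Submodule.range_liftQ]
    exact DirectSum.range_toModule _

/-- With `Fil^•` as before and each graded piece `Gr^r(Fil^•)` `p`-torsion-free, the
natural map `F̃ → M[1/p]` (given on the copy of `Fil^r` by `x ↦ p^{-r} x`) is injective,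
with image `∑_{r} p^{-r} Fil^r ⊆ M[1/p]`. -/
theorem stmt_6 (R : Type*) [CommRing R] (p : R) (hp : p ∈ nonZeroDivisors R)
    (M : Type*) [AddCommGroup M] [Module R M] [Module.Finite R M]
    (Fil : ℤ → Submodule R M) (hanti : Antitone Fil)
    (htop : ∀ r : ℤ, r ≤ 0 → Fil r = ⊤) (hbot : ∃ b : ℤ, ∀ r ≥ b, Fil r = ⊥)
    (htf : ∀ (r : ℤ) (x : M), x ∈ Fil r → p • x ∈ Fil (r + 1) → x ∈ Fil (r + 1)) :
    filtColimRel R M p Fil ≤ LinearMap.ker (filtSumToLoc R M p Fil) ∧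
    ∀ h : filtColimRel R M p Fil ≤ LinearMap.ker (filtSumToLoc R M p Fil),
      Function.Injective ((filtColimRel R M p Fil).liftQ (filtSumToLoc R M p Fil) h) ∧
      LinearMap.range ((filtColimRel R M p Fil).liftQ (filtSumToLoc R M p Fil) h) =
        ⨆ r : ℤ, LinearMap.range (filtToLoc R M p Fil r) :=
  stmt_6_general R p M Fil hanti htop hbot htf
end
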